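/- If P ∈ ℚ⟨X⟩ is a Lie polynomial that is homogeneous of degree n (i.e., a ℚ-linear combination of words of length n), then r(P) = n·P (the Dynkin–Specht–Wever property). -/

import Mathlib

/-!
Setting: `ℚ⟨X⟩ = FreeAlgebra ℚ X`, the free associative `ℚ`-algebra on a type `X` of
non-commuting variables, with the commutator bracket `⁅P,Q⁆ = P*Q - Q*P` and canonical
inclusion `ι = FreeAlgebra.ι ℚ`.  The words (elements of `FreeMonoid X`) form a `ℚ`-basis
`FreeAlgebra.basisFreeMonoid ℚ X` of `ℚ⟨X⟩`.
-/

/-- The right-normed bracketing of a word: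
`[ι x₁,[ι x₂,[…,[ι x_{n−1}, ι xₙ]…]]]`, with the empty word mapped to `0`. -/
noncomputable def rword {X : Type*} : List X → FreeAlgebra ℚ X
  | [] => 0
  | [x] => FreeAlgebra.ι ℚ x
  | x :: y :: ys => ⁅FreeAlgebra.ι ℚ x, rword (y :: ys)⁆

/-- The right-normed bracketing map `r : ℚ⟨X⟩ → ℚ⟨X⟩`: the unique `ℚ`-linear map sending the
basis word `w₁w₂⋯wₙ` to `[ι w₁,[ι w₂,[…,[ι w_{n−1}, ι wₙ]…]]]` (and the empty word `1` to `0`,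
and a single letter `x` to `ι x`). -/
noncomputable def rmap (X : Type*) : FreeAlgebra ℚ X →ₗ[ℚ] FreeAlgebra ℚ X :=
  (FreeAlgebra.basisFreeMonoid ℚ X).constr ℚ fun w => rword w.toList

/-- The coefficient of the word `w` in `P`, with respect to the basis of words of `ℚ⟨X⟩`. -/
noncomputable def coeffWord {X : Type*} (P : FreeAlgebra ℚ X) (w : FreeMonoid X) : ℚ :=
  (FreeAlgebra.basisFreeMonoid ℚ X).repr P w

attribute [local instance 100] LieRing.ofAssociativeRing

/-- `P` is a Lie polynomial: it belongs to the Lie subalgebra of `ℚ⟨X⟩` (under the commutator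
bracket) generated by the image of `ι`, i.e. the smallest `ℚ`-subspace of `ℚ⟨X⟩` containing
`ι(X)` and closed under commutators. -/
def IsLiePolynomial {X : Type*} (P : FreeAlgebra ℚ X) : Prop :=
  P ∈ LieSubalgebra.lieSpan ℚ (FreeAlgebra ℚ X) (Set.range (FreeAlgebra.ι ℚ))

/-- `P` is homogeneous of degree `n`: a `ℚ`-linear combination of words of length `n`. -/
def IsHomogeneous {X : Type*} (n : ℕ) (P : FreeAlgebra ℚ X) : Prop :=
  P ∈ Submodule.span ℚ
    ((fun w : List X => (w.map (FreeAlgebra.ι ℚ)).prod) '' {w : List X | w.length = n})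


/-!
Let `ρ = adRep : ℚ⟨X⟩ → End ℚ⟨X⟩` be the algebra map extending `x ↦ ad (ι x)`, `ε` the
constant-term map `algebraMapInv`, and `D = euler` the Euler derivation, `D w = |w| • w` on words.
Checking on words gives `r (u * v) = ρ u (r v) + ε v • r u`. On Lie polynomials `ρ = ad` and
`ε = 0`, so `r ⁅u, v⁆ = ⁅u, r v⁆ - ⁅v, r u⁆`; as `D` is a derivation, induction over the Lie span
shows `r = D` on Lie polynomials, and `D P = n • P` for `P` homogeneous of degree `n`.
-/

open FreeAlgebra

namespace FreeAlgebra

section CommSemiring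

variable (R : Type*) [CommSemiring R] {X : Type*}

theorem basisFreeMonoid_apply (w : FreeMonoid X) :
    basisFreeMonoid R X w = (w.toList.map (ι R)).prod := by
  rw [basisFreeMonoid, Module.Basis.map_apply, Finsupp.coe_basisSingleOne]
  change equivMonoidAlgebraFreeMonoid.symm (MonoidAlgebra.single w 1) = _
  simp [equivMonoidAlgebraFreeMonoid, MonoidAlgebra.lift_single, FreeMonoid.lift_apply]

variable {R}

theorem basisFreeMonoid_constr_list_prod {M : Type*} [AddCommMonoid M] [Module R M]
    (f : FreeMonoid X → M) (l : List X) :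
    (basisFreeMonoid R X).constr R f (l.map (ι R)).prod = f (FreeMonoid.ofList l) := by
  simpa [basisFreeMonoid_apply] using (basisFreeMonoid R X).constr_basis R f (.ofList l)

theorem algebraMapInv_list_prod (l : List X) :
    algebraMapInv (l.map (ι R)).prod = if l = [] then (1 : R) else 0 := by
  cases l <;> simp [algebraMapInv]

variable (R X)

noncomputable def euler : FreeAlgebra R X →ₗ[R] FreeAlgebra R X :=
  (basisFreeMonoid R X).constr R fun w => (w.toList.length : R) • (w.toList.map (ι R)).prod

variable {R X}

theorem euler_list_prod (l : List X) :
    euler R X (l.map (ι R)).prod = (l.length : R) • (l.map (ι R)).prod := by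
  rw [euler, basisFreeMonoid_constr_list_prod, FreeMonoid.toList_ofList]

theorem euler_one : euler R X 1 = 0 := by
  simpa using euler_list_prod (R := R) ([] : List X)

theorem euler_ι (x : X) : euler R X (ι R x) = ι R x := by
  simpa using euler_list_prod (R := R) [x]

theorem euler_ι_mul (x : X) (v : FreeAlgebra R X) :
    euler R X (ι R x * v) = ι R x * v + ι R x * euler R X v := by
  suffices h : euler R X ∘ₗ LinearMap.mulLeft R (ι R x) =
      LinearMap.mulLeft R (ι R x) + LinearMap.mulLeft R (ι R x) ∘ₗ euler R X from
    LinearMap.congr_fun h v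
  refine (basisFreeMonoid R X).ext fun w => ?_
  simp only [LinearMap.comp_apply, LinearMap.add_apply, LinearMap.mulLeft_apply,
    basisFreeMonoid_apply]
  rw [← List.prod_cons, ← List.map_cons, euler_list_prod, euler_list_prod, mul_smul_comm,
    List.map_cons, List.prod_cons, List.length_cons, Nat.cast_succ, add_smul, one_smul, add_comm]

theorem euler_mul (u v : FreeAlgebra R X) :
    euler R X (u * v) = euler R X u * v + u * euler R X v := by
  induction u using FreeAlgebra.induction generalizing v with
  | grade0 _ => simp [Algebra.algebraMap_eq_smul_one, euler_one]
  | grade1 x => rw [euler_ι_mul, euler_ι]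
  | mul a b ha hb =>
    rw [mul_assoc, ha, hb, ha b]
    simp only [add_mul, mul_add, mul_assoc, add_assoc]
  | add a b ha hb => simp only [add_mul, map_add, ha, hb]; abel

end CommSemiring

theorem euler_lie {R X : Type*} [CommRing R] (u v : FreeAlgebra R X) :
    euler R X ⁅u, v⁆ = ⁅euler R X u, v⁆ + ⁅u, euler R X v⁆ := by
  simp only [Ring.lie_def, map_sub, euler_mul]
  abel

end FreeAlgebra

section

variable {X : Type*}

noncomputable def adRep : FreeAlgebra ℚ X →ₐ[ℚ] Module.End ℚ (FreeAlgebra ℚ X) :=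
  lift ℚ fun x => LieAlgebra.ad ℚ (FreeAlgebra ℚ X) (ι ℚ x)

theorem rmap_list_prod (l : List X) : rmap X (l.map (ι ℚ)).prod = rword l := by
  rw [rmap, basisFreeMonoid_constr_list_prod, FreeMonoid.toList_ofList]

theorem rmap_one : rmap X 1 = 0 := by
  simpa [rword] using rmap_list_prod ([] : List X)

theorem rmap_ι (x : X) : rmap X (ι ℚ x) = ι ℚ x := by
  simpa [rword] using rmap_list_prod [x]

theorem rmap_ι_mul (x : X) (v : FreeAlgebra ℚ X) :
    rmap X (ι ℚ x * v) = ⁅ι ℚ x, rmap X v⁆ + algebraMapInv v • ι ℚ x := by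
  suffices h : rmap X ∘ₗ LinearMap.mulLeft ℚ (ι ℚ x) =
      (LieAlgebra.ad ℚ _ (ι ℚ x) : Module.End ℚ _) ∘ₗ rmap X +
        (algebraMapInv : FreeAlgebra ℚ X →ₐ[ℚ] ℚ).toLinearMap.smulRight (ι ℚ x) from
    LinearMap.congr_fun h v
  refine (basisFreeMonoid ℚ X).ext fun w => ?_
  simp only [LinearMap.comp_apply, LinearMap.add_apply, LinearMap.mulLeft_apply,
    LinearMap.smulRight_apply, AlgHom.toLinearMap_apply, LieAlgebra.ad_apply,
    basisFreeMonoid_apply]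
  rw [← List.prod_cons, ← List.map_cons, rmap_list_prod, rmap_list_prod,
    algebraMapInv_list_prod]
  rcases w.toList with _ | ⟨y, l⟩ <;> simp [rword]

theorem rmap_mul (u v : FreeAlgebra ℚ X) :
    rmap X (u * v) = adRep u (rmap X v) + algebraMapInv v • rmap X u := by
  induction u using FreeAlgebra.induction generalizing v with
  | grade0 _ => simp [Algebra.algebraMap_eq_smul_one, rmap_one]
  | grade1 x => simp [rmap_ι_mul, adRep, rmap_ι]
  | mul a b ha hb =>
    rw [mul_assoc, ha, hb, ha b, map_mul, map_add, map_smul, map_mul, Module.End.mul_apply,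
      smul_add, smul_smul, mul_comm]
    abel
  | add a b ha hb => simp only [add_mul, map_add, ha, hb, LinearMap.add_apply, smul_add]; abel

namespace IsLiePolynomial

variable {P : FreeAlgebra ℚ X}

theorem algebraMapInv_eq_zero (hP : IsLiePolynomial P) : algebraMapInv P = 0 := by
  induction hP using LieSubalgebra.lieSpan_induction with
  | mem _ h => obtain ⟨x, rfl⟩ := h; simp [algebraMapInv]
  | zero => exact map_zero _
  | add _ _ _ _ hu hv => rw [map_add, hu, hv, add_zero]
  | smul _ _ _ hu => rw [map_smul, hu, smul_zero]
  | lie _ _ _ _ _ _ => rw [Ring.lie_def, map_sub, map_mul, map_mul, mul_comm, sub_self]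

theorem adRep_eq_ad (hP : IsLiePolynomial P) : adRep P = LieAlgebra.ad ℚ _ P := by
  induction hP using LieSubalgebra.lieSpan_induction with
  | mem _ h => obtain ⟨x, rfl⟩ := h; exact lift_ι_apply _ _
  | zero => simp
  | add _ _ _ _ hu hv => rw [map_add, hu, hv, map_add]
  | smul _ _ _ hu => rw [map_smul, hu, map_smul]
  | lie _ _ _ _ hu hv =>
    rw [← AlgHom.coe_toLieHom, LieHom.map_lie, LieHom.map_lie, AlgHom.coe_toLieHom, hu, hv]

theorem rmap_eq_euler (hP : IsLiePolynomial P) : rmap X P = euler ℚ X P := by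
  induction hP using LieSubalgebra.lieSpan_induction with
  | mem _ h => obtain ⟨x, rfl⟩ := h; rw [rmap_ι, euler_ι]
  | zero => simp
  | add _ _ _ _ hu hv => rw [map_add, hu, hv, map_add]
  | smul _ _ _ hu => rw [map_smul, hu, map_smul]
  | lie u v hu hv hru hrv =>
    rw [euler_lie, Ring.lie_def u v, map_sub, rmap_mul, rmap_mul, adRep_eq_ad hu, adRep_eq_ad hv,
      algebraMapInv_eq_zero hu, algebraMapInv_eq_zero hv, hru, hrv]
    simp only [zero_smul, add_zero, LieAlgebra.ad_apply]
    rw [← lie_skew v]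
    abel

end IsLiePolynomial

theorem IsHomogeneous.euler_eq {n : ℕ} {P : FreeAlgebra ℚ X} (hP : IsHomogeneous n P) :
    euler ℚ X P = (n : ℚ) • P := by
  induction hP using Submodule.span_induction with
  | mem _ h => obtain ⟨l, rfl, rfl⟩ := h; exact euler_list_prod l
  | zero => simp
  | add _ _ _ _ hu hv => rw [map_add, hu, hv, smul_add]
  | smul _ _ _ hu => rw [map_smul, hu, smul_comm]

end

/-- Dynkin–Specht–Wever: if `P` is a homogeneous Lie polynomial of degree `n`, then
`r(P) = n·P`. -/
theorem stmt_4 {X : Type*} (n : ℕ) (P : FreeAlgebra ℚ X)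
    (hLie : IsLiePolynomial P) (hHom : IsHomogeneous n P) :
    rmap X P = (n : ℚ) • P :=
  hLie.rmap_eq_euler.trans hHom.euler_eq
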